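/- Let s > 0, K_y ≥ 0, t ∈ [0, 1], let P and Q be real d×d matrices, and let x, v ∈ B_s^d with x ≠ 0, d_s(0, v) ≤ K_y, Px ≠ 0, Qx ≠ 0 and (tP + (1−t)Q)x ≠ 0. Then d_s(v, (tP + (1−t)Q)^{⊗_s} x) ≤ t·d_s(v, P^{⊗_s} x) + (1−t)·d_s(v, Q^{⊗_s} x) + 2K_y. -/

import Mathlib

open Real MeasureTheory

/-- Inverse hyperbolic tangent on `(-1, 1)`. -/
noncomputable def Real.artanhLog (x : ℝ) : ℝ := (1 / 2) * Real.log ((1 + x) / (1 - x))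

/-- Matrix-vector multiplication viewed as a map between Euclidean spaces. -/
noncomputable def mulVecE {d d' : ℕ} (P : Matrix (Fin d') (Fin d) ℝ)
    (x : EuclideanSpace ℝ (Fin d)) : EuclideanSpace ℝ (Fin d') :=
  (EuclideanSpace.equiv (Fin d') ℝ).symm (P.mulVec (EuclideanSpace.equiv (Fin d) ℝ x))

/-- Möbius matrix multiplication `P^{⊗_s} x` on the Poincaré ball of radius `s`.
When `P.mulVec x = 0` this evaluates to `0`, as required. -/
noncomputable def mobiusMat {d d' : ℕ} (s : ℝ) (P : Matrix (Fin d') (Fin d) ℝ)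
    (x : EuclideanSpace ℝ (Fin d)) : EuclideanSpace ℝ (Fin d') :=
  (s * Real.tanh ((‖mulVecE P x‖ / ‖x‖) * Real.artanhLog (‖x‖ / s)) / ‖mulVecE P x‖) • mulVecE P x

/-- Frobenius norm of a real matrix. -/
noncomputable def frobNorm {m n : ℕ} (P : Matrix (Fin m) (Fin n) ℝ) : ℝ :=
  Real.sqrt (∑ i, ∑ j, (P i j) ^ 2)

/-- Lorentz gamma factor `γ_x = 1/√(1 - ‖x‖²/s²)`. -/
noncomputable def lorentzGamma {d : ℕ} (s : ℝ) (x : EuclideanSpace ℝ (Fin d)) : ℝ :=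
  1 / Real.sqrt (1 - ‖x‖ ^ 2 / s ^ 2)

/-- Poincaré distance `d_s(x,y) = 2s·arsinh(γ_x γ_y ‖x - y‖ / s)`. -/
noncomputable def dPoin {d : ℕ} (s : ℝ) (x y : EuclideanSpace ℝ (Fin d)) : ℝ :=
  2 * s * Real.arsinh (lorentzGamma s x * lorentzGamma s y * ‖x - y‖ / s)

/-- Möbius addition on the Poincaré ball of radius `s`. -/
noncomputable def mobiusAdd {d : ℕ} (s : ℝ) (x y : EuclideanSpace ℝ (Fin d)) :
    EuclideanSpace ℝ (Fin d) :=
  ((1 + 2 / s ^ 2 * (inner ℝ x y : ℝ) + 1 / s ^ 2 * ‖y‖ ^ 2) /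
      (1 + 2 / s ^ 2 * (inner ℝ x y : ℝ) + 1 / s ^ 4 * ‖x‖ ^ 2 * ‖y‖ ^ 2)) • x +
    ((1 - 1 / s ^ 2 * ‖x‖ ^ 2) /
      (1 + 2 / s ^ 2 * (inner ℝ x y : ℝ) + 1 / s ^ 4 * ‖x‖ ^ 2 * ‖y‖ ^ 2)) • y

/-- Exponential map at the origin of the Poincaré ball of radius `s`. -/
noncomputable def expZero {d : ℕ} (s : ℝ) (v : EuclideanSpace ℝ (Fin d)) :
    EuclideanSpace ℝ (Fin d) :=
  (s * Real.tanh (‖v‖ / s) / ‖v‖) • v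

/-- Logarithmic map at the origin of the Poincaré ball of radius `s`. -/
noncomputable def logZero {d : ℕ} (s : ℝ) (y : EuclideanSpace ℝ (Fin d)) :
    EuclideanSpace ℝ (Fin d) :=
  (s * Real.artanhLog (‖y‖ / s) / ‖y‖) • y


/-
With `R = tP + (1 - t)Q`, the triangle inequality through the origin gives
`d(v, R ⊗ x) ≤ d(0, v) + d(0, R ⊗ x)` and `d(0, P ⊗ x) ≤ d(0, v) + d(v, P ⊗ x)`.
Since `‖P ⊗ x‖ = s tanh ((‖Px‖/‖x‖) artanh (‖x‖/s))`, the distance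
`d(0, P ⊗ x) = 2s (‖Px‖/‖x‖) artanh (‖x‖/s)` is a positive multiple of `‖Px‖`, hence convex
in `P`. Combining the three inequalities with weights `t` and `1 - t` costs `2 d(0, v) ≤ 2 K_y`.
-/

open Set

section PoincareDistance

variable {d : ℕ} {s : ℝ}

lemma lorentzGamma_nonneg (s : ℝ) (w : EuclideanSpace ℝ (Fin d)) : 0 ≤ lorentzGamma s w := by
  unfold lorentzGamma; positivity

lemma dPoin_zero_left (s : ℝ) (w : EuclideanSpace ℝ (Fin d)) :
    dPoin s 0 w = 2 * s * arsinh (lorentzGamma s w * ‖w‖ / s) := by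
  simp [dPoin, lorentzGamma]

lemma cosh_arsinh_lorentzGamma_mul_norm (hs : 0 < s) {w : EuclideanSpace ℝ (Fin d)}
    (hw : ‖w‖ < s) : cosh (arsinh (lorentzGamma s w * ‖w‖ / s)) = lorentzGamma s w := by
  have hsw : 0 < s ^ 2 - ‖w‖ ^ 2 := sub_pos.2 (by gcongr)
  have hu : 0 ≤ 1 - ‖w‖ ^ 2 / s ^ 2 := by rw [one_sub_div (by positivity)]; positivity
  have hγ : 1 + (lorentzGamma s w * ‖w‖ / s) ^ 2 = lorentzGamma s w ^ 2 := by
    simp only [lorentzGamma, div_pow, one_pow, mul_pow, sq_sqrt hu]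
    field_simp
    ring
  rw [cosh_arsinh, hγ, sqrt_sq (lorentzGamma_nonneg s w)]

lemma dPoin_le_dPoin_zero_add (hs : 0 < s) {v w : EuclideanSpace ℝ (Fin d)}
    (hv : ‖v‖ < s) (hw : ‖w‖ < s) : dPoin s v w ≤ dPoin s 0 v + dPoin s 0 w := by
  rw [dPoin_zero_left, dPoin_zero_left, dPoin, ← mul_add]
  gcongr
  rw [← arsinh_sinh (_ + _), arsinh_le_arsinh, sinh_add, sinh_arsinh, sinh_arsinh,
    cosh_arsinh_lorentzGamma_mul_norm hs hv, cosh_arsinh_lorentzGamma_mul_norm hs hw]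
  have := mul_le_mul_of_nonneg_left (norm_sub_le v w)
    (mul_nonneg (lorentzGamma_nonneg s v) (lorentzGamma_nonneg s w))
  calc _ ≤ lorentzGamma s v * lorentzGamma s w * (‖v‖ + ‖w‖) / s := by gcongr
    _ = _ := by ring

lemma dPoin_zero_le_add_dPoin (hs : 0 < s) {v w : EuclideanSpace ℝ (Fin d)}
    (hv : ‖v‖ < s) (hw : ‖w‖ < s) : dPoin s 0 w ≤ dPoin s 0 v + dPoin s v w := by
  rw [dPoin_zero_left, dPoin_zero_left, dPoin, ← sub_le_iff_le_add', ← mul_sub]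
  gcongr
  rw [← arsinh_sinh (_ - _), arsinh_le_arsinh, sinh_sub, sinh_arsinh, sinh_arsinh,
    cosh_arsinh_lorentzGamma_mul_norm hs hv, cosh_arsinh_lorentzGamma_mul_norm hs hw]
  have := mul_le_mul_of_nonneg_left (norm_sub_norm_le w v)
    (mul_nonneg (lorentzGamma_nonneg s v) (lorentzGamma_nonneg s w))
  rw [norm_sub_rev w v] at this
  calc _ = lorentzGamma s v * lorentzGamma s w * (‖w‖ - ‖v‖) / s := by ring
    _ ≤ _ := by gcongr

lemma dPoin_zero_of_norm_eq_mul_tanh (hs : 0 < s) {w : EuclideanSpace ℝ (Fin d)} {c : ℝ}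
    (hw : ‖w‖ = s * tanh c) : dPoin s 0 w = 2 * s * c := by
  have hγ : lorentzGamma s w = cosh c := by
    have h : 1 - tanh c ^ 2 = (cosh c ^ 2)⁻¹ := by
      rw [tanh_eq_sinh_div_cosh, div_pow, one_sub_div (by positivity), cosh_sq_sub_sinh_sq,
        one_div]
    rw [lorentzGamma, hw, mul_pow, mul_div_cancel_left₀ _ (by positivity), h, sqrt_inv,
      sqrt_sq (cosh_pos c).le, one_div, inv_inv]
  have hsinh : cosh c * (s * tanh c) / s = sinh c := by
    rw [tanh_eq_sinh_div_cosh]; field_simp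
  rw [dPoin_zero_left, hγ, hw, hsinh, arsinh_sinh]

end PoincareDistance

lemma artanhLog_eq_artanh {u : ℝ} (hu : u ∈ Icc (-1) 1) : artanhLog u = artanh u :=
  (artanh_eq_half_log hu).symm

lemma artanhLog_nonneg {u : ℝ} (hu0 : 0 ≤ u) (hu1 : u ≤ 1) : 0 ≤ artanhLog u := by
  rw [artanhLog_eq_artanh ⟨by linarith, hu1⟩]
  exact artanh_nonneg hu0

lemma tanh_nonneg {c : ℝ} (hc : 0 ≤ c) : 0 ≤ tanh c := by
  rw [tanh_eq_sinh_div_cosh]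
  exact div_nonneg (sinh_nonneg_iff.2 hc) (cosh_pos c).le

section MobiusMatrixMultiplication

variable {d d' : ℕ} {s : ℝ} {x : EuclideanSpace ℝ (Fin d)}

lemma mulVecE_add (P Q : Matrix (Fin d') (Fin d) ℝ) (x : EuclideanSpace ℝ (Fin d)) :
    mulVecE (P + Q) x = mulVecE P x + mulVecE Q x := by
  simp [mulVecE, Matrix.add_mulVec]

lemma mulVecE_smul (c : ℝ) (P : Matrix (Fin d') (Fin d) ℝ) (x : EuclideanSpace ℝ (Fin d)) :
    mulVecE (c • P) x = c • mulVecE P x := by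
  simp [mulVecE, Matrix.smul_mulVec]

lemma convexOn_norm_mulVecE (x : EuclideanSpace ℝ (Fin d)) :
    ConvexOn ℝ univ fun P : Matrix (Fin d') (Fin d) ℝ ↦ ‖mulVecE P x‖ := by
  refine ⟨convex_univ, fun P _ Q _ a b ha hb _ ↦ ?_⟩
  dsimp only
  rw [mulVecE_add, mulVecE_smul, mulVecE_smul]
  refine (norm_add_le _ _).trans_eq ?_
  rw [norm_smul, norm_smul, norm_of_nonneg ha, norm_of_nonneg hb, smul_eq_mul, smul_eq_mul]

lemma norm_mobiusMat (hs : 0 < s) (hx : ‖x‖ ≤ s) (P : Matrix (Fin d') (Fin d) ℝ) :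
    ‖mobiusMat s P x‖ = s * tanh (‖mulVecE P x‖ / ‖x‖ * artanhLog (‖x‖ / s)) := by
  rcases eq_or_ne (mulVecE P x) 0 with hPx | hPx
  · simp [mobiusMat, hPx]
  have hA := artanhLog_nonneg (by positivity) ((div_le_one hs).2 hx)
  have htanh := tanh_nonneg (by positivity : 0 ≤ ‖mulVecE P x‖ / ‖x‖ * artanhLog (‖x‖ / s))
  rw [mobiusMat, norm_smul, norm_of_nonneg (by positivity),
    div_mul_cancel₀ _ (norm_ne_zero_iff.2 hPx)]

lemma norm_mobiusMat_lt (hs : 0 < s) (hx : ‖x‖ ≤ s) (P : Matrix (Fin d') (Fin d) ℝ) :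
    ‖mobiusMat s P x‖ < s := by
  rw [norm_mobiusMat hs hx]
  exact mul_lt_of_lt_one_right hs (tanh_lt_one _)

lemma dPoin_zero_mobiusMat (hs : 0 < s) (hx : ‖x‖ ≤ s) (P : Matrix (Fin d') (Fin d) ℝ) :
    dPoin s 0 (mobiusMat s P x) = 2 * s * artanhLog (‖x‖ / s) / ‖x‖ * ‖mulVecE P x‖ := by
  rw [dPoin_zero_of_norm_eq_mul_tanh hs (norm_mobiusMat hs hx P)]
  ring

lemma convexOn_dPoin_zero_mobiusMat (hs : 0 < s) (hx : ‖x‖ ≤ s) :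
    ConvexOn ℝ univ fun P : Matrix (Fin d') (Fin d) ℝ ↦ dPoin s 0 (mobiusMat s P x) := by
  simp_rw [dPoin_zero_mobiusMat hs hx]
  exact (convexOn_norm_mulVecE x).smul
    (by have := artanhLog_nonneg (by positivity) ((div_le_one hs).2 hx); positivity)

end MobiusMatrixMultiplication

theorem stmt9_general {d : ℕ} (s Ky t : ℝ) (hs : 0 < s) (ht0 : 0 ≤ t) (ht1 : t ≤ 1)
    (P Q : Matrix (Fin d) (Fin d) ℝ) (x v : EuclideanSpace ℝ (Fin d))
    (hxball : ‖x‖ < s) (hvball : ‖v‖ < s) (hvKy : dPoin s 0 v ≤ Ky) :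
    dPoin s v (mobiusMat s (t • P + (1 - t) • Q) x) ≤
      t * dPoin s v (mobiusMat s P x) + (1 - t) * dPoin s v (mobiusMat s Q x) + 2 * Ky := by
  have hconv := (convexOn_dPoin_zero_mobiusMat hs hxball.le).2 (mem_univ P) (mem_univ Q) ht0
    (sub_nonneg.2 ht1) (add_sub_cancel t 1)
  simp only [smul_eq_mul] at hconv
  have hR := dPoin_le_dPoin_zero_add hs hvball
    (norm_mobiusMat_lt hs hxball.le (t • P + (1 - t) • Q))
  have hP := dPoin_zero_le_add_dPoin hs hvball (norm_mobiusMat_lt hs hxball.le P)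
  have hQ := dPoin_zero_le_add_dPoin hs hvball (norm_mobiusMat_lt hs hxball.le Q)
  linarith [mul_le_mul_of_nonneg_left hP ht0, mul_le_mul_of_nonneg_left hQ (sub_nonneg.2 ht1)]

/-- Majorizer of the hyperbolic distance for convex combinations of matrices. -/
theorem stmt9 {d : ℕ} (s Ky t : ℝ) (hs : 0 < s) (hKy : 0 ≤ Ky) (ht0 : 0 ≤ t) (ht1 : t ≤ 1)
    (P Q : Matrix (Fin d) (Fin d) ℝ) (x v : EuclideanSpace ℝ (Fin d))
    (hx0 : x ≠ 0) (hxball : ‖x‖ < s) (hvball : ‖v‖ < s) (hvKy : dPoin s 0 v ≤ Ky)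
    (hPx : mulVecE P x ≠ 0) (hQx : mulVecE Q x ≠ 0)
    (hRx : mulVecE (t • P + (1 - t) • Q) x ≠ 0) :
    dPoin s v (mobiusMat s (t • P + (1 - t) • Q) x) ≤
      t * dPoin s v (mobiusMat s P x) + (1 - t) * dPoin s v (mobiusMat s Q x) + 2 * Ky :=
  stmt9_general s Ky t hs ht0 ht1 P Q x v hxball hvball hvKy
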